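/- For α, β ∈ ℂ, the 6-dimensional anticommutative algebras T(α) and T(β), with basis e1,...,e6 and nonzero products e1e2 = e3, e1e3 = e4, e1e5 = (α+1)e6, e2e3 = e5, e2e4 = αe6 (resp. with β), are isomorphic if and only if β = α or β = -α-1. -/

import Mathlib

/-!
Every triple product in `T(γ)` is a multiple of `e₆`: in coordinates (numbered from 1, so `p₁ = p 0`),
`p(q(rs)) = ((γ + 1) p₁q₂ + γ p₂q₁)(r₁s₂ - r₂s₁) e₆`.
Let `e : T(α) ≅ T(β)`, `u = e(e₁)`, `v = e(e₂)` and `D = u₁v₂ - u₂v₁`.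
Since `e₆ = e₁(e₂(e₁e₂)) - e₂(e₁(e₁e₂))`, `e` sends `e₆` to `D² e₆`, so `D ≠ 0`.
Comparing `e₁(e₁(e₁e₂)) = 0` and `e₂(e₁(e₁e₂)) = α e₆` with their images gives
`(2β + 1) u₁u₂ = 0` and `αD = (β + 1) u₂v₁ + β u₁v₂`, which force `β = α`
(when `2β + 1 = 0` or `u₂ = 0`) or `β = -α - 1` (when `u₁ = 0`).
Conversely, exchanging `e₁` and `e₂` (and adjusting signs) is an isomorphism `T(α) ≅ T(-α - 1)`.
-/

/-- The 6-dimensional algebra `T⁶₀₉(α)` with `e₁e₂=e₃, e₁e₃=e₄,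
e₁e₅=(α+1)e₆, e₂e₃=e₅, e₂e₄=αe₆` (anticommutative, other products zero). -/
def mulT609 (α : ℂ) (x y : Fin 6 → ℂ) : Fin 6 → ℂ :=
  ![0, 0, x 0 * y 1 - x 1 * y 0, x 0 * y 2 - x 2 * y 0,
    x 1 * y 2 - x 2 * y 1,
    (α + 1) * (x 0 * y 4 - x 4 * y 0) + α * (x 1 * y 3 - x 3 * y 1)]

def tripleCoeffT609 (γ : ℂ) (p q r s : Fin 6 → ℂ) : ℂ :=
  ((γ + 1) * p 0 * q 1 + γ * p 1 * q 0) * (r 0 * s 1 - r 1 * s 0)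

lemma mulT609_mulT609_mulT609 (γ : ℂ) (p q r s : Fin 6 → ℂ) :
    mulT609 γ p (mulT609 γ q (mulT609 γ r s)) = tripleCoeffT609 γ p q r s • Pi.single 5 1 := by
  ext i; fin_cases i <;> simp [mulT609, tripleCoeffT609]; ring

lemma tripleCoeffT609_smul_map {α β : ℂ} {e : (Fin 6 → ℂ) ≃ₗ[ℂ] (Fin 6 → ℂ)}
    (he : ∀ u v, e (mulT609 α u v) = mulT609 β (e u) (e v)) (p q r s : Fin 6 → ℂ) :
    tripleCoeffT609 α p q r s • e (Pi.single 5 1) =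
      tripleCoeffT609 β (e p) (e q) (e r) (e s) • Pi.single 5 1 := by
  rw [← map_smul, ← mulT609_mulT609_mulT609, ← mulT609_mulT609_mulT609, he, he, he]

lemma eq_or_eq_neg_sub_one_of_det_ne_zero {R : Type*} [CommRing R] [NoZeroDivisors R]
    {α β a b c d : R} (hD : a * d - b * c ≠ 0)
    (hw : α * (a * d - b * c) = (β + 1) * (b * c) + β * (a * d))
    (hab : (2 * β + 1) * (a * b) = 0) :
    β = α ∨ β = -α - 1 := by
  by_cases hβ : 2 * β + 1 = 0
  · left
    have : (α - β) * (a * d - b * c) = 0 := by linear_combination hw + (b * c) * hβ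
    exact (sub_eq_zero.mp ((mul_eq_zero.mp this).resolve_right hD)).symm
  rcases mul_eq_zero.mp ((mul_eq_zero.mp hab).resolve_left hβ) with rfl | rfl
  · right
    have hbc : b * c ≠ 0 := by rwa [zero_mul, zero_sub, neg_ne_zero] at hD
    have : (α + β + 1) * (b * c) = 0 := by linear_combination -hw
    linear_combination (mul_eq_zero.mp this).resolve_right hbc
  · left
    have had : a * d ≠ 0 := by rwa [zero_mul, sub_zero] at hD
    have : (α - β) * (a * d) = 0 := by linear_combination hw
    linear_combination -(mul_eq_zero.mp this).resolve_right had

lemma eq_or_eq_neg_sub_one_of_mulT609_equiv {α β : ℂ} (e : (Fin 6 → ℂ) ≃ₗ[ℂ] (Fin 6 → ℂ))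
    (he : ∀ u v, e (mulT609 α u v) = mulT609 β (e u) (e v)) : β = α ∨ β = -α - 1 := by
  have key := tripleCoeffT609_smul_map he
  have h11 := key (Pi.single 0 1) (Pi.single 0 1) (Pi.single 0 1) (Pi.single 1 1)
  have h12 := key (Pi.single 0 1) (Pi.single 1 1) (Pi.single 0 1) (Pi.single 1 1)
  have h21 := key (Pi.single 1 1) (Pi.single 0 1) (Pi.single 0 1) (Pi.single 1 1)
  simp only [tripleCoeffT609, Pi.single_eq_same, ne_eq, zero_ne_one, not_false_eq_true,
    Pi.single_eq_of_ne, one_ne_zero] at h11 h12 h21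
  generalize e (Pi.single 0 1) = u at *
  generalize e (Pi.single 1 1) = v at *
  have he₆ : e (Pi.single 5 1) =
      ((u 0 * v 1 - u 1 * v 0) * (u 0 * v 1 - u 1 * v 0)) • Pi.single 5 1 := by
    linear_combination (norm := module) h12 - h21
  have hD : u 0 * v 1 - u 1 * v 0 ≠ 0 := by
    intro h0
    rw [h0, zero_mul, zero_smul, LinearEquiv.map_eq_zero_iff] at he₆
    simp at he₆
  rw [he₆] at h11 h21
  replace h11 := congrFun h11 5
  replace h21 := congrFun h21 5
  simp only [mul_one, mul_zero, add_zero, sub_zero, Pi.smul_apply, Pi.single_eq_same,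
    smul_eq_mul, zero_mul, zero_eq_mul, zero_add] at h11 h21
  refine eq_or_eq_neg_sub_one_of_det_ne_zero hD ?_ ?_
  · exact mul_right_cancel₀ hD (by linear_combination h21)
  · linear_combination h11.resolve_right hD

def swapT609 : (Fin 6 → ℂ) ≃ₗ[ℂ] (Fin 6 → ℂ) :=
  LinearEquiv.ofInvolutive
    { toFun := fun x => ![x 1, x 0, -x 2, -x 4, -x 3, x 5]
      map_add' := fun x y => by ext i; fin_cases i <;> simp [add_comm]
      map_smul' := fun c x => by ext i; fin_cases i <;> simp }
    fun x => by ext i; fin_cases i <;> simp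

lemma swapT609_apply (x : Fin 6 → ℂ) : swapT609 x = ![x 1, x 0, -x 2, -x 4, -x 3, x 5] := rfl

lemma swapT609_mulT609 (α : ℂ) (u v : Fin 6 → ℂ) :
    swapT609 (mulT609 α u v) = mulT609 (-α - 1) (swapT609 u) (swapT609 v) := by
  ext i; fin_cases i <;> simp [swapT609_apply, mulT609] <;> ring

/-- `T⁶₀₉(α) ≅ T⁶₀₉(β)` if and only if `β = α` or `β = -α-1`. -/
theorem T609_iso_iff (α β : ℂ) :
    (∃ e : (Fin 6 → ℂ) ≃ₗ[ℂ] (Fin 6 → ℂ),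
      ∀ u v : Fin 6 → ℂ, e (mulT609 α u v) = mulT609 β (e u) (e v)) ↔
    (β = α ∨ β = -α - 1) := by
  refine ⟨fun ⟨e, he⟩ => eq_or_eq_neg_sub_one_of_mulT609_equiv e he, ?_⟩
  rintro (rfl | rfl)
  · exact ⟨LinearEquiv.refl ℂ _, fun u v => rfl⟩
  · exact ⟨swapT609, swapT609_mulT609 α⟩
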